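/- arXiv:2105.03258 — 6 statements merged into one kernel-verified Lean document; each statement's English description precedes it below -/
import Mathlib

section
/- The law of X' is invariant under the reflection x ↦ 2p - x of the parameter x: the law of p + A·|C·p - x| equals the law of p + A·|C·p - (2p - x)|. -/
open MeasureTheory ProbabilityTheory
open scoped ENNReal

/-- The uniform distribution on the interval `[s, t]`: Lebesgue measure restricted to
`[s, t]`, scaled by `(t - s)⁻¹`. -/
noncomputable def uniformMeasure (s t : ℝ) : Measure ℝ :=
  (ENNReal.ofReal (t - s))⁻¹ • volume.restrict (Set.Icc s t)

lemma uniform02_reflect :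
    Measure.map (fun c : ℝ => 2 - c) (uniformMeasure 0 2) = uniformMeasure 0 2 := by
  have hm : Measurable (fun c : ℝ => 2 - c) := measurable_const.sub measurable_id
  have hpre : (fun c : ℝ => 2 - c) ⁻¹' (Set.Icc 0 2) = Set.Icc 0 2 := by
    ext y; simp only [Set.mem_preimage, Set.mem_Icc]; constructor <;> intro h <;>
      exact ⟨by linarith [h.1, h.2], by linarith [h.1, h.2]⟩
  have key : Measure.map (fun c : ℝ => 2 - c) (volume.restrict (Set.Icc (0:ℝ) 2))
      = volume.restrict (Set.Icc (0:ℝ) 2) := by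
    conv_lhs => rw [← hpre]
    rw [← Measure.restrict_map hm measurableSet_Icc, Measure.map_sub_left_eq_self]
  rw [uniformMeasure, Measure.map_smul, key]

/-- The law of `X' = p + A * |C * p - x|` is invariant under the reflection `x ↦ 2p - x` of the parameter `x`. -/
theorem gwo_update_reflection
    {Ω : Type*} [MeasurableSpace Ω] (P : Measure Ω) [IsProbabilityMeasure P]
    (a p x : ℝ) (ha : 0 < a) (A C : Ω → ℝ) (hA : Measurable A) (hC : Measurable C)
    (hInd : IndepFun A C P)
    (hAlaw : Measure.map A P = uniformMeasure (-a) a)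
    (hClaw : Measure.map C P = uniformMeasure 0 2)
    : Measure.map (fun ω => p + A ω * |C ω * p - x|) P
      = Measure.map (fun ω => p + A ω * |C ω * p - (2 * p - x)|) P := by
  set f : ℝ × ℝ → ℝ := fun q => p + q.1 * |q.2 * p - x| with hf
  have hfm : Measurable f := by
    apply measurable_const.add
    exact (measurable_fst.mul ((measurable_snd.mul measurable_const).sub measurable_const).abs)
  have hpair : Measurable (fun ω => (A ω, C ω)) := hA.prodMk hC
  have hjoint : Measure.map (fun ω => (A ω, C ω)) P
      = (Measure.map A P).prod (Measure.map C P) :=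
    (indepFun_iff_map_prod_eq_prod_map_map hA.aemeasurable hC.aemeasurable).mp hInd
  -- rewrite RHS integrand
  have hRw : (fun ω => p + A ω * |C ω * p - (2 * p - x)|)
      = fun ω => f (A ω, 2 - C ω) := by
    funext ω
    simp only [hf]
    rw [show (2 - C ω) * p - x = -(C ω * p - (2 * p - x)) by ring, abs_neg]
  rw [hRw]
  have hpair2 : Measurable (fun ω => (A ω, 2 - C ω)) :=
    hA.prodMk (measurable_const.sub hC)
  have h1 : Measure.map (fun ω => p + A ω * |C ω * p - x|) P
      = Measure.map f (Measure.map (fun ω => (A ω, C ω)) P) :=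
    (Measure.map_map hfm hpair).symm
  have h2 : Measure.map (fun ω => f (A ω, 2 - C ω)) P
      = Measure.map f (Measure.map (fun ω => (A ω, 2 - C ω)) P) :=
    (Measure.map_map hfm hpair2).symm
  rw [h1, h2]
  congr 1
  have h2C : Measure.map (fun ω => 2 - C ω) P = Measure.map C P := by
    have hsub : Measurable (fun c : ℝ => 2 - c) := by fun_prop
    have : (fun ω => 2 - C ω) = (fun c : ℝ => 2 - c) ∘ C := rfl
    rw [this, ← Measure.map_map hsub hC, hClaw, uniform02_reflect]
  have hInd2 : IndepFun A (fun ω => 2 - C ω) P :=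
    hInd.comp measurable_id (measurable_const.sub measurable_id)
  have hjoint2 : Measure.map (fun ω => (A ω, 2 - C ω)) P
      = (Measure.map A P).prod (Measure.map (fun ω => 2 - C ω) P) :=
    (indepFun_iff_map_prod_eq_prod_map_map hA.aemeasurable
      (measurable_const.sub hC).aemeasurable).mp hInd2
  rw [hjoint, hjoint2, h2C]
end

section
/- Suppose p > 0, x > 2p, and a·(x - 2p) < u ≤ a·x. Then P(A·|C·p - x| ≤ u) = 1/2 + (1/(4a))·( u/p + (u/p)·ln(a·x/u) - a·(x/p - 2) ). -/
open MeasureTheory ProbabilityTheory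
open scoped ENNReal

/-!
By independence, `P(A·|C·p - x| ≤ u)` is the average over `α ∈ [-a, a]` of
`P(α·|C·p - x| ≤ u)`. Since `x > 2p`, on `C ∈ [0, 2]` the event reads `α·(x - C·p) ≤ u`,
i.e. `C ≥ c(α)` with `c(α) = 0` for `α ≤ u/x` and `c(α) = (x - u/α)/p` otherwise; the bound
`u > a·(x - 2p)` keeps `c(α) ≤ 2`, so the conditional probability is `1 - c(α)/2`. The
logarithm comes from `∫_{u/x}^{a} (x - u/α)/p dα = (a·x - u - u·ln(a·x/u))/p`.
-/

theorem ProbabilityTheory.IndepFun.measure_prodMk_preimage_eq_lintegral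
    {Ω α β : Type*} [MeasurableSpace Ω] [MeasurableSpace α] [MeasurableSpace β]
    {P : Measure Ω} [IsFiniteMeasure P] {X : Ω → α} {Y : Ω → β}
    (hX : AEMeasurable X P) (hY : AEMeasurable Y P) (hXY : IndepFun X Y P)
    {S : Set (α × β)} (hS : MeasurableSet S) :
    P ((fun ω ↦ (X ω, Y ω)) ⁻¹' S) = ∫⁻ a, P.map Y (Prod.mk a ⁻¹' S) ∂P.map X := by
  rw [← Measure.map_apply_of_aemeasurable (hX.prodMk hY) hS, hXY.map_prod_eq_prod_map_map hX hY,
    Measure.prod_apply hS]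

section Uniform

variable {s t : ℝ}

lemma uniformMeasure_apply {E : Set ℝ} (hE : MeasurableSet E) :
    uniformMeasure s t E = (ENNReal.ofReal (t - s))⁻¹ * volume (E ∩ Set.Icc s t) := by
  rw [uniformMeasure, Measure.smul_apply, Measure.restrict_apply hE, smul_eq_mul]

lemma uniformMeasure_of_inter_Icc_eq_Icc (hst : s < t) {c : ℝ} {E : Set ℝ}
    (hE : MeasurableSet E) (hEc : E ∩ Set.Icc s t = Set.Icc c t) :
    uniformMeasure s t E = ENNReal.ofReal ((t - c) / (t - s)) := by
  rw [uniformMeasure_apply hE, hEc, Real.volume_Icc, ENNReal.ofReal_div_of_pos (by linarith),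
    ENNReal.div_eq_inv_mul]

lemma isProbabilityMeasure_uniformMeasure (hst : s < t) :
    IsProbabilityMeasure (uniformMeasure s t) := by
  constructor
  rw [uniformMeasure_of_inter_Icc_eq_Icc hst MeasurableSet.univ (Set.univ_inter _),
    div_self (by linarith), ENNReal.ofReal_one]

lemma ae_mem_Icc_uniformMeasure : ∀ᵐ α ∂uniformMeasure s t, α ∈ Set.Icc s t :=
  Measure.ae_smul_measure (ae_restrict_mem measurableSet_Icc) _

lemma integral_uniformMeasure (hst : s ≤ t) (f : ℝ → ℝ) :
    ∫ α, f α ∂uniformMeasure s t = (t - s)⁻¹ * ∫ α in Set.Icc s t, f α := by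
  rw [uniformMeasure, integral_smul_measure, ENNReal.toReal_inv,
    ENNReal.toReal_ofReal (by linarith), smul_eq_mul]

end Uniform

noncomputable def gwoThreshold (p x u : ℝ) : ℝ → ℝ :=
  (Set.Ioi (u / x)).indicator fun α ↦ (x - u / α) / p

section Threshold

variable {p x u α : ℝ}

lemma gwoThreshold_of_le (h : α ≤ u / x) : gwoThreshold p x u α = 0 :=
  Set.indicator_of_notMem (not_lt.mpr h) _

lemma gwoThreshold_of_lt (h : u / x < α) : gwoThreshold p x u α = (x - u / α) / p :=
  Set.indicator_of_mem h _

lemma gwoThreshold_nonneg (hp : 0 < p) (hx : 0 < x) (hu : 0 ≤ u) :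
    0 ≤ gwoThreshold p x u α := by
  rcases le_or_gt α (u / x) with hα | hα
  · rw [gwoThreshold_of_le hα]
  · have hα0 : 0 < α := (div_nonneg hu hx.le).trans_lt hα
    have : u / α < x := (div_lt_iff₀ hα0).mpr (by rwa [div_lt_iff₀ hx, mul_comm] at hα)
    rw [gwoThreshold_of_lt hα]
    exact div_nonneg (by linarith) hp.le

lemma gwoThreshold_le_two (hp : 0 < p) (hx : 0 < x) (hu : 0 ≤ u)
    (hαu : α * (x - 2 * p) ≤ u) :
    gwoThreshold p x u α ≤ 2 := by
  rcases le_or_gt α (u / x) with hα | hα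
  · rw [gwoThreshold_of_le hα]; norm_num
  · have hα0 : 0 < α := (div_nonneg hu hx.le).trans_lt hα
    have : x - 2 * p ≤ u / α := (le_div_iff₀ hα0).mpr (by linarith)
    rw [gwoThreshold_of_lt hα, div_le_iff₀ hp]
    linarith

lemma mul_abs_sub_le_iff_gwoThreshold_le (hp : 0 < p) (hx : 2 * p ≤ x) (hu : 0 ≤ u) {γ : ℝ}
    (hγ : γ ∈ Set.Icc (0 : ℝ) 2) :
    α * |γ * p - x| ≤ u ↔ gwoThreshold p x u α ≤ γ := by
  have hx0 : 0 < x := by linarith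
  have hγp : γ * p ≤ x := by nlinarith [hγ.2]
  rw [abs_of_nonpos (by linarith), neg_sub]
  rcases le_or_gt α (u / x) with hα | hα
  · rw [gwoThreshold_of_le hα]
    refine iff_of_true ?_ hγ.1
    rcases le_or_gt α 0 with hα0 | hα0
    · nlinarith [mul_nonneg (neg_nonneg.mpr hα0) (sub_nonneg.mpr hγp)]
    · nlinarith [(le_div_iff₀ hx0).mp hα, mul_nonneg (mul_nonneg hα0.le hγ.1) hp.le]
  · have hα0 : 0 < α := (div_nonneg hu hx0.le).trans_lt hα
    rw [gwoThreshold_of_lt hα, div_le_iff₀ hp, mul_comm, ← le_div_iff₀ hα0]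
    constructor <;> intro h <;> linarith

lemma integral_gwoThreshold {a : ℝ} (hx : 0 < x) (hu : 0 < u) (hua : u ≤ a * x) :
    ∫ α in Set.Icc (-a) a, gwoThreshold p x u α
      = (a * x - u - u * Real.log (a * x / u)) / p := by
  have hux : 0 < u / x := div_pos hu hx
  have huxa : u / x ≤ a := (div_le_iff₀ hx).mpr (by linarith)
  have hset : Set.Ioi (u / x) ∩ Set.Icc (-a) a = Set.Ioc (u / x) a := by
    ext β
    simp only [Set.mem_inter_iff, Set.mem_Ioi, Set.mem_Icc, Set.mem_Ioc]
    constructor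
    · rintro ⟨h1, -, h2⟩; exact ⟨h1, h2⟩
    · rintro ⟨h1, h2⟩; exact ⟨h1, by linarith, h2⟩
  rw [gwoThreshold, integral_indicator measurableSet_Ioi,
    Measure.restrict_restrict measurableSet_Ioi, hset, ← intervalIntegral.integral_of_le huxa]
  have hinv : IntervalIntegrable (fun β : ℝ ↦ u / β) volume (u / x) a := by
    refine (continuousOn_const.div continuousOn_id fun β hβ ↦ ?_).intervalIntegrable
    rw [Set.uIcc_of_le huxa] at hβ
    exact (hux.trans_le hβ.1).ne'
  have hlog : ∫ β in u / x..a, u / β = u * Real.log (a * x / u) := by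
    rw [intervalIntegral.integral_congr fun β _ ↦ div_eq_mul_inv u β,
      intervalIntegral.integral_const_mul, integral_inv_of_pos hux (hux.trans_le huxa),
      div_div_eq_mul_div]
  rw [intervalIntegral.integral_div, intervalIntegral.integral_sub intervalIntegrable_const hinv,
    intervalIntegral.integral_const, hlog, smul_eq_mul, sub_mul, div_mul_cancel₀ u hx.ne']

lemma measurable_gwoThreshold : Measurable (gwoThreshold p x u) :=
  ((measurable_const.sub (measurable_const.div measurable_id)).div_const p).indicator
    measurableSet_Ioi

lemma uniformMeasure_setOf_mul_abs_sub_le (hp : 0 < p) (hx : 2 * p ≤ x) (hu : 0 ≤ u) :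
    uniformMeasure 0 2 {γ | α * |γ * p - x| ≤ u}
      = ENNReal.ofReal ((2 - gwoThreshold p x u α) / 2) := by
  have hc0 : 0 ≤ gwoThreshold p x u α := gwoThreshold_nonneg hp (by linarith) hu
  rw [uniformMeasure_of_inter_Icc_eq_Icc (c := gwoThreshold p x u α) two_pos
    (measurableSet_le (by fun_prop) measurable_const) (Set.ext fun γ ↦ ?_), sub_zero]
  constructor
  · rintro ⟨h, hγ⟩
    exact ⟨(mul_abs_sub_le_iff_gwoThreshold_le hp hx hu hγ).mp h, hγ.2⟩
  · rintro ⟨h, h2⟩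
    have hγ : γ ∈ Set.Icc (0 : ℝ) 2 := ⟨hc0.trans h, h2⟩
    exact ⟨(mul_abs_sub_le_iff_gwoThreshold_le hp hx hu hγ).mpr h, hγ⟩

end Threshold

lemma measure_mul_abs_mul_sub_le_eq_lintegral_gwoThreshold {Ω : Type*} [MeasurableSpace Ω]
    {P : Measure Ω} [IsFiniteMeasure P] {A C : Ω → ℝ} (hA : AEMeasurable A P)
    (hC : AEMeasurable C P) (hInd : IndepFun A C P) (hClaw : P.map C = uniformMeasure 0 2)
    {p x u : ℝ} (hp : 0 < p) (hx : 2 * p ≤ x) (hu : 0 ≤ u) :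
    P {ω | A ω * |C ω * p - x| ≤ u}
      = ∫⁻ α, ENNReal.ofReal ((2 - gwoThreshold p x u α) / 2) ∂P.map A := by
  let S : Set (ℝ × ℝ) := {q | q.1 * |q.2 * p - x| ≤ u}
  change P ((fun ω ↦ (A ω, C ω)) ⁻¹' S) = _
  rw [hInd.measure_prodMk_preimage_eq_lintegral hA hC
    (measurableSet_le (by fun_prop) measurable_const), hClaw]
  exact lintegral_congr fun α ↦ uniformMeasure_setOf_mul_abs_sub_le hp hx hu

/-- CDF case from the proof of Theorem 1. -/
theorem gwo_cdf_case1
    {Ω : Type*} [MeasurableSpace Ω] (P : Measure Ω) [IsProbabilityMeasure P]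
    (a p x : ℝ) (ha : 0 < a) (A C : Ω → ℝ) (hA : Measurable A) (hC : Measurable C)
    (hInd : IndepFun A C P)
    (hAlaw : Measure.map A P = uniformMeasure (-a) a)
    (hClaw : Measure.map C P = uniformMeasure 0 2)
    (u : ℝ) (hp : 0 < p) (hx : 2 * p < x) (hu1 : a * (x - 2 * p) < u) (hu2 : u ≤ a * x) :
    (P {ω | A ω * |C ω * p - x| ≤ u}).toReal
      = 1 / 2 + (1 / (4 * a)) * (u / p + (u / p) * Real.log (a * x / u) - a * (x / p - 2)) := by
  have hx0 : 0 < x := by linarith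
  have hu : 0 < u := (mul_pos ha (by linarith)).trans hu1
  have := isProbabilityMeasure_uniformMeasure (neg_lt_self ha)
  set c := gwoThreshold p x u
  have hc : ∀ᵐ α ∂uniformMeasure (-a) a, c α ∈ Set.Icc 0 2 := by
    filter_upwards [ae_mem_Icc_uniformMeasure] with α hα
    exact ⟨gwoThreshold_nonneg hp hx0 hu.le,
      gwoThreshold_le_two hp hx0 hu.le (by nlinarith [hα.2])⟩
  have hc_int : Integrable c (uniformMeasure (-a) a) :=
    .of_bound measurable_gwoThreshold.aestronglyMeasurable 2
      (hc.mono fun α h ↦ (Real.norm_of_nonneg h.1).trans_le h.2)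
  rw [measure_mul_abs_mul_sub_le_eq_lintegral_gwoThreshold hA.aemeasurable hC.aemeasurable hInd
      hClaw hp hx.le hu.le, hAlaw,
    ← integral_eq_lintegral_of_nonneg_ae
      (hc.mono fun α h ↦ div_nonneg (sub_nonneg.mpr h.2) zero_le_two)
      ((measurable_const.sub measurable_gwoThreshold).div_const 2).aestronglyMeasurable]
  rw [integral_div, integral_sub (integrable_const 2) hc_int, integral_const, probReal_univ,
    one_smul, integral_uniformMeasure (by linarith), integral_gwoThreshold hx0 hu hu2]
  field_simp
  ring
end

section
/- Suppose p > 0, x > 2p, and 0 ≤ u ≤ a·(x - 2p). Then P(A·|C·p - x| ≤ u) = 1/2 + (u/(4·a·p))·ln( x/(x - 2p) ). -/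
open MeasureTheory ProbabilityTheory Set
open scoped ENNReal

theorem ProbabilityTheory.IndepFun.measure_preimage_eq_lintegral_map
    {Ω α β : Type*} [MeasurableSpace Ω] [MeasurableSpace α] [MeasurableSpace β]
    {μ : Measure Ω} [IsFiniteMeasure μ] {X : Ω → α} {Y : Ω → β}
    (hXY : IndepFun X Y μ) (hX : Measurable X) (hY : Measurable Y)
    {S : Set (α × β)} (hS : MeasurableSet S) :
    μ ((fun ω => (X ω, Y ω)) ⁻¹' S) = ∫⁻ x, μ.map Y (Prod.mk x ⁻¹' S) ∂μ.map X := by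
  rw [← Measure.map_apply (hX.prodMk hY) hS,
    (indepFun_iff_map_prod_eq_prod_map_map hX.aemeasurable hY.aemeasurable).mp hXY,
    Measure.prod_apply hS]

theorem uniformMeasure_Iic {s t r : ℝ} (hst : s < t) (hrt : r ≤ t) :
    uniformMeasure s t (Iic r) = ENNReal.ofReal ((r - s) / (t - s)) := by
  rw [uniformMeasure, Measure.smul_apply, Measure.restrict_apply measurableSet_Iic,
    inter_comm, ← Ici_inter_Iic, inter_assoc, Iic_inter_Iic, min_eq_right hrt, Ici_inter_Iic,
    Real.volume_Icc, ENNReal.ofReal_div_of_pos (sub_pos.2 hst),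
    smul_eq_mul, ENNReal.div_eq_inv_mul]

theorem uniformMeasure_setOf_mul_le {a d u : ℝ} (ha : 0 < a) (hd : 0 < d) (hu : u ≤ a * d) :
    uniformMeasure (-a) a {y | y * d ≤ u} = ENNReal.ofReal (1 / 2 + u / (2 * a) * d⁻¹) := by
  have hset : {y | y * d ≤ u} = Iic (u / d) := by
    ext y
    simp only [mem_ofPred_eq, mem_Iic, le_div_iff₀ hd]
  rw [hset, uniformMeasure_Iic (by linarith) ((div_le_iff₀ hd).2 hu)]
  congr 1
  field_simp
  ring

theorem lintegral_uniformMeasure_eq_ofReal {s t : ℝ} (hst : s < t)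
    {F : ℝ → ℝ≥0∞} {f : ℝ → ℝ}
    (hFf : EqOn F (ENNReal.ofReal ∘ f) (Icc s t)) (hf : IntegrableOn f (Icc s t))
    (hf_nonneg : ∀ y ∈ Icc s t, 0 ≤ f y) :
    ∫⁻ y, F y ∂uniformMeasure s t = ENNReal.ofReal ((t - s)⁻¹ * ∫ y in s..t, f y) := by
  rw [uniformMeasure, lintegral_smul_measure, setLIntegral_congr_fun measurableSet_Icc hFf,
    intervalIntegral.integral_of_le hst.le, ← integral_Icc_eq_integral_Ioc,
    ENNReal.ofReal_mul (inv_nonneg.2 (sub_nonneg.2 hst.le)),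
    ENNReal.ofReal_inv_of_pos (sub_pos.2 hst), smul_eq_mul,
    ofReal_integral_eq_lintegral_ofReal hf ((ae_restrict_iff' measurableSet_Icc).2
      (Filter.Eventually.of_forall hf_nonneg))]
  rfl

theorem integral_inv_sub_mul {p x s t : ℝ} (hp : p ≠ 0) (hs : 0 < x - s * p)
    (ht : 0 < x - t * p) :
    ∫ c in s..t, (x - c * p)⁻¹ = p⁻¹ * Real.log ((x - s * p) / (x - t * p)) := by
  simp_rw [mul_comm _ p] at hs ht ⊢
  rw [intervalIntegral.integral_comp_sub_mul (fun y => y⁻¹) hp, integral_inv_of_pos ht hs,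
    smul_eq_mul]

/-- CDF case from the proof of Theorem 1. -/
theorem gwo_cdf_case2
    {Ω : Type*} [MeasurableSpace Ω] (P : Measure Ω) [IsProbabilityMeasure P]
    (a p x : ℝ) (ha : 0 < a) (A C : Ω → ℝ) (hA : Measurable A) (hC : Measurable C)
    (hInd : IndepFun A C P)
    (hAlaw : Measure.map A P = uniformMeasure (-a) a)
    (hClaw : Measure.map C P = uniformMeasure 0 2)
    (u : ℝ) (hp : 0 < p) (hx : 2 * p < x) (hu1 : 0 ≤ u) (hu2 : u ≤ a * (x - 2 * p)) :
    (P {ω | A ω * |C ω * p - x| ≤ u}).toReal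
      = 1 / 2 + (u / (4 * a * p)) * Real.log (x / (x - 2 * p)) := by
  have hpos : ∀ c ∈ Icc (0 : ℝ) 2, 0 < x - c * p := fun c hc => by nlinarith [hc.2]
  set f : ℝ → ℝ := fun c => 1 / 2 + u / (2 * a) * (x - c * p)⁻¹
  have hinv_cont : ContinuousOn (fun c => (x - c * p)⁻¹) (Icc 0 2) :=
    (by fun_prop : Continuous fun c => x - c * p).continuousOn.inv₀ fun c hc => (hpos c hc).ne'
  have hf_nonneg : ∀ c ∈ Icc (0 : ℝ) 2, 0 ≤ f c := fun c hc =>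
    add_nonneg (by norm_num) (mul_nonneg (by positivity) (inv_nonneg.2 (hpos c hc).le))
  have hlaw : P {ω | A ω * |C ω * p - x| ≤ u}
      = ∫⁻ c, uniformMeasure (-a) a {y | y * |c * p - x| ≤ u} ∂uniformMeasure 0 2 := by
    rw [← hAlaw, ← hClaw]
    exact hInd.symm.measure_preimage_eq_lintegral_map hC hA
      (S := {q : ℝ × ℝ | q.2 * |q.1 * p - x| ≤ u})
      (measurableSet_le (by fun_prop) (by fun_prop))
  have hsection : EqOn (fun c => uniformMeasure (-a) a {y | y * |c * p - x| ≤ u})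
      (ENNReal.ofReal ∘ f) (Icc 0 2) := fun c hc => by
    simp only [abs_sub_comm _ x, abs_of_pos (hpos c hc)]
    exact uniformMeasure_setOf_mul_le ha (hpos c hc)
      (by nlinarith [mul_nonneg ha.le (mul_nonneg hp.le (sub_nonneg.2 hc.2))])
  have hintegral :
      ∫ c in (0 : ℝ)..2, f c = 1 + u / (2 * a) * (p⁻¹ * Real.log (x / (x - 2 * p))) := by
    have hinv_int : IntervalIntegrable (fun c => (x - c * p)⁻¹) volume 0 2 :=
      hinv_cont.intervalIntegrable_of_Icc zero_le_two
    rw [intervalIntegral.integral_add intervalIntegrable_const (hinv_int.const_mul _),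
      intervalIntegral.integral_const, intervalIntegral.integral_const_mul,
      integral_inv_sub_mul hp.ne' (by simpa using hpos 0 (by norm_num)) (hpos 2 (by norm_num))]
    norm_num
  rw [hlaw, lintegral_uniformMeasure_eq_ofReal two_pos hsection
    ((continuousOn_const.add (continuousOn_const.mul hinv_cont)).integrableOn_Icc) hf_nonneg,
    ENNReal.toReal_ofReal (mul_nonneg (by norm_num)
      (intervalIntegral.integral_nonneg zero_le_two hf_nonneg)), hintegral]
  field_simp
  ring
end

section
/- Suppose p ≠ 0 and m ≤ 0, where m = a·(-|p| + |x - p|) and n = a·(|p| + |x - p|). Then the law of X' is absolutely continuous with respect to Lebesgue measure with density g given by: g(u) = (1/(n - m))·ln( √(-m·n) / |u - p| ) when 0 < |u - p| < -m; g(u) = (1/(2(n - m)))·ln( n / |u - p| ) when -m ≤ |u - p| < n; and g(u) = 0 when |u - p| ≥ n. -/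
open MeasureTheory ProbabilityTheory
open scoped ENNReal

noncomputable def phiF (a v w : ℝ) : ℝ := if v ≤ a * |w| then (2 * (a * |w|))⁻¹ else 0

lemma phi_abs_le (a v : ℝ) (hv : 0 < v) (w : ℝ) : ‖phiF a v w‖ ≤ (2 * v)⁻¹ := by
  rw [Real.norm_eq_abs]
  unfold phiF
  split_ifs with h
  · have h2 : 0 < 2 * v := by linarith
    have h3 : 2 * v ≤ 2 * (a * |w|) := by linarith
    rw [abs_of_nonneg (inv_nonneg.2 (by linarith))]
    exact inv_anti₀ h2 h3
  · simp [inv_nonneg.2 (by linarith : (0:ℝ) ≤ 2 * v), hv.le]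

lemma phi_nonneg (a v w : ℝ) (ha : 0 ≤ a) : 0 ≤ phiF a v w := by
  unfold phiF
  split_ifs with h
  · positivity
  · exact le_rfl

open MeasureTheory intervalIntegral

lemma psi_meas (v : ℝ) : Measurable (fun w : ℝ => if v ≤ w then w⁻¹ else 0) :=
  Measurable.ite (measurableSet_le measurable_const measurable_id) measurable_inv measurable_const

lemma psi_intble (v : ℝ) (hv : 0 < v) (s t : ℝ) :
    IntervalIntegrable (fun w => if v ≤ w then w⁻¹ else 0) volume s t := by
  apply IntervalIntegrable.mono_fun' (g := fun _ => v⁻¹) intervalIntegrable_const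
    (psi_meas v).aestronglyMeasurable
  filter_upwards with w
  rw [Real.norm_eq_abs]
  split_ifs with h
  · rw [abs_of_nonneg (inv_nonneg.2 (hv.le.trans h))]
    exact inv_anti₀ hv h
  · simp [inv_nonneg.2 hv.le]

lemma zero_upto (v t : ℝ) (hv : 0 < v) (ht0 : 0 ≤ t) (ht : t ≤ v) :
    ∫ w in (0:ℝ)..t, (if v ≤ w then w⁻¹ else 0) = 0 := by
  have h1 : (∫ w in (0:ℝ)..t, (if v ≤ w then w⁻¹ else 0)) = ∫ w in (0:ℝ)..t, (0:ℝ) := by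
    apply intervalIntegral.integral_congr_ae
    filter_upwards [compl_mem_ae_iff.2 (Real.volume_singleton (a := v))] with w hw hmem
    rw [if_neg]
    intro hle
    have hwle : w ≤ v := le_trans hmem.2 (max_le hv.le ht)
    exact hw (le_antisymm hwle hle)
  rw [h1, intervalIntegral.integral_zero]

lemma K_calc (v β : ℝ) (hv : 0 < v) (hβ : 0 ≤ β) :
    ∫ w in (0:ℝ)..β, (if v ≤ w then w⁻¹ else 0) = max 0 (Real.log (β / v)) := by
  rcases le_or_gt β v with h | h
  · rw [zero_upto v β hv hβ h, eq_comm, max_eq_left]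
    exact Real.log_nonpos (div_nonneg hβ hv.le) (div_le_one_of_le₀ h hv.le)
  · have hsplit : (∫ w in (0:ℝ)..β, (if v ≤ w then w⁻¹ else 0))
        = (∫ w in (0:ℝ)..v, (if v ≤ w then w⁻¹ else 0))
          + ∫ w in v..β, (if v ≤ w then w⁻¹ else 0) :=
      (integral_add_adjacent_intervals (psi_intble v hv 0 v) (psi_intble v hv v β)).symm
    have h2 : (∫ w in v..β, (if v ≤ w then w⁻¹ else 0)) = Real.log (β / v) := by
      rw [intervalIntegral.integral_congr (g := fun w => w⁻¹), integral_inv]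
      · rw [Set.uIcc_of_le h.le]
        intro hmem
        exact absurd hmem.1 (not_le.2 hv)
      · intro w hw
        rw [Set.uIcc_of_le h.le] at hw
        simp [hw.1]
    rw [hsplit, zero_upto v v hv hv.le le_rfl, h2, zero_add, eq_comm, max_eq_right]
    exact Real.log_nonneg ((one_le_div hv).2 h.le)

lemma phi_meas (a v : ℝ) : Measurable (phiF a v) := by
  unfold phiF
  exact Measurable.ite
    (measurableSet_le measurable_const (measurable_const.mul measurable_abs))
    ((measurable_const.mul (measurable_const.mul measurable_abs)).inv) measurable_const

lemma phi_intble (a v : ℝ) (hv : 0 < v) (s t : ℝ) :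
    IntervalIntegrable (phiF a v) volume s t := by
  apply IntervalIntegrable.mono_fun' (g := fun _ => (2 * v)⁻¹) intervalIntegrable_const
    (phi_meas a v).aestronglyMeasurable
  filter_upwards with w
  rw [Real.norm_eq_abs]
  unfold phiF
  split_ifs with h
  · have h2 : 0 < 2 * v := by linarith
    have h3 : 2 * v ≤ 2 * (a * |w|) := by linarith
    rw [abs_of_nonneg (inv_nonneg.2 (by linarith))]
    exact inv_anti₀ h2 h3
  · simp [inv_nonneg.2 (by linarith : (0:ℝ) ≤ 2 * v), hv.le]

lemma phi_even (a v w : ℝ) : phiF a v (-w) = phiF a v w := by simp [phiF]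

lemma Kphi_calc (a v : ℝ) (ha : 0 < a) (hv : 0 < v) (β : ℝ) (hβ : 0 ≤ β) :
    ∫ w in (0:ℝ)..β, phiF a v w = (2 * a)⁻¹ * max 0 (Real.log (a * β / v)) := by
  have hcongr : ∫ w in (0:ℝ)..β, phiF a v w
      = ∫ w in (0:ℝ)..β, (2:ℝ)⁻¹ * (if v ≤ a * w then (a * w)⁻¹ else 0) := by
    apply intervalIntegral.integral_congr
    intro w hw
    rw [Set.uIcc_of_le hβ] at hw
    unfold phiF
    rw [abs_of_nonneg hw.1]
    by_cases h : v ≤ a * w <;> simp [h, mul_inv]; ring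
  rw [hcongr, intervalIntegral.integral_const_mul]
  have := intervalIntegral.integral_comp_mul_left
    (f := fun w => if v ≤ w then w⁻¹ else 0) (a := (0:ℝ)) (b := β) (ne_of_gt ha)
  rw [this, mul_zero, K_calc v (a * β) hv (by positivity), smul_eq_mul]
  ring

lemma Kphi_neg (a v β : ℝ) : (∫ w in (0:ℝ)..(-β), phiF a v w) = - ∫ w in (0:ℝ)..β, phiF a v w := by
  have h : (∫ w in (-β:ℝ)..0, phiF a v w) = ∫ w in (0:ℝ)..β, phiF a v w := by
    have h0 : (∫ w in (0:ℝ)..β, phiF a v (-w)) = ∫ w in (-β:ℝ)..(-0:ℝ), phiF a v w :=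
      intervalIntegral.integral_comp_neg (fun w => phiF a v w)
    simp only [phi_even, neg_zero] at h0
    exact h0.symm
  rw [← h, intervalIntegral.integral_symm]

lemma integral_phi (a p x v : ℝ) (ha : 0 < a) (hp : p ≠ 0) (hv : 0 < v)
    (hsx : 0 ≤ x * (2 * p - x)) :
    ∫ c in (0:ℝ)..2, phiF a v (p * c - x)
      = |p|⁻¹ * ((2 * a)⁻¹ * max 0 (Real.log (a * |x| / v))
          + (2 * a)⁻¹ * max 0 (Real.log (a * |2 * p - x| / v))) := by
  rw [intervalIntegral.integral_comp_mul_sub (phiF a v) hp x]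
  have hsplit : (∫ w in (p * 0 - x)..(p * 2 - x), phiF a v w)
      = (∫ w in (0:ℝ)..x, phiF a v w) + ∫ w in (0:ℝ)..(p * 2 - x), phiF a v w := by
    rw [show p * 0 - x = -x by ring]
    rw [← intervalIntegral.integral_add_adjacent_intervals
      (phi_intble a v hv (-x) 0) (phi_intble a v hv 0 (p * 2 - x))]
    congr 1
    have := Kphi_neg a v x
    rw [intervalIntegral.integral_symm] at this
    linarith [this]
  rw [hsplit, smul_eq_mul]
  rcases hp.lt_or_gt with hp0 | hp0
  · have hx : x ≤ 0 := by nlinarith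
    have h2 : 2 * p - x ≤ 0 := by nlinarith
    have e1 : (∫ w in (0:ℝ)..x, phiF a v w) = - ∫ w in (0:ℝ)..(-x), phiF a v w := by
      rw [← Kphi_neg a v (-x), neg_neg]
    have e2 : (∫ w in (0:ℝ)..(p * 2 - x), phiF a v w)
        = - ∫ w in (0:ℝ)..(-(p * 2 - x)), phiF a v w := by
      rw [← Kphi_neg a v (-(p * 2 - x)), neg_neg]
    rw [e1, e2, Kphi_calc a v ha hv (-x) (by linarith),
      Kphi_calc a v ha hv (-(p * 2 - x)) (by linarith),
      abs_of_nonpos hx, abs_of_nonpos h2, abs_of_neg hp0]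
    rw [show -(p * 2 - x) = -(2 * p - x) by ring]
    ring
  · have hx : 0 ≤ x := by nlinarith
    have h2 : 0 ≤ 2 * p - x := by nlinarith
    rw [Kphi_calc a v ha hv x hx, Kphi_calc a v ha hv (p * 2 - x) (by linarith),
      abs_of_nonneg hx, abs_of_nonneg h2, abs_of_pos hp0]
    rw [show p * 2 - x = 2 * p - x by ring]

lemma abs_pair (p x : ℝ) (h : |x - p| ≤ |p|) :
    (|x| = |p| - |x - p| ∧ |2 * p - x| = |p| + |x - p|) ∨
    (|x| = |p| + |x - p| ∧ |2 * p - x| = |p| - |x - p|) := by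
  rcases abs_cases x with ⟨h1, h2⟩ | ⟨h1, h2⟩ <;>
    rcases abs_cases (2 * p - x) with ⟨h3, h4⟩ | ⟨h3, h4⟩ <;>
    rcases abs_cases p with ⟨h5, h6⟩ | ⟨h5, h6⟩ <;>
    rcases abs_cases (x - p) with ⟨h7, h8⟩ | ⟨h7, h8⟩ <;>
    first
      | (left; constructor <;> linarith)
      | (right; constructor <;> linarith)

-- the pointwise density value identity
lemma density_value (a p x v m n : ℝ) (ha : 0 < a) (hp : p ≠ 0) (hv : 0 < v)
    (hm : m = a * (-|p| + |x - p|)) (hn : n = a * (|p| + |x - p|)) (hm0 : m ≤ 0) :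
    (2:ℝ)⁻¹ * (|p|⁻¹ * ((2 * a)⁻¹ * max 0 (Real.log (a * |x| / v))
        + (2 * a)⁻¹ * max 0 (Real.log (a * |2 * p - x| / v))))
      = (2 * (n - m))⁻¹ * (max 0 (Real.log (-m / v)) + max 0 (Real.log (n / v))) := by
  have hpp : 0 < |p| := abs_pos.2 hp
  have habs : |x - p| ≤ |p| := by nlinarith [hm]
  have hnm : n - m = 2 * a * |p| := by rw [hm, hn]; ring
  rcases abs_pair p x habs with ⟨e1, e2⟩ | ⟨e1, e2⟩ <;>
  · rw [e1, e2]
    have hma : a * (|p| - |x - p|) = -m := by rw [hm]; ring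
    have hna : a * (|p| + |x - p|) = n := by rw [hn]
    rw [show a * (|p| - |x - p|) / v = -m / v by rw [← hma],
      show a * (|p| + |x - p|) / v = n / v by rw [← hna], hnm]
    set M1 := max 0 (Real.log (-m / v))
    set M2 := max 0 (Real.log (n / v))
    have h2a : (2 * a) ≠ 0 := by positivity
    field_simp
    try ring
    try exact Or.inl trivial

lemma val_eq_g (m n v : ℝ) (hv : 0 < v) (hn : 0 < n) (hm0 : m ≤ 0) (hmn : -m ≤ n)
    (hnm : 0 < n - m) (gu : ℝ)
    (hg1 : v < -m → gu = (1 / (n - m)) * Real.log (Real.sqrt (-m * n) / v))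
    (hg2 : -m ≤ v → v < n → gu = (1 / (2 * (n - m))) * Real.log (n / v))
    (hg3 : n ≤ v → gu = 0) :
    (2 * (n - m))⁻¹ * (max 0 (Real.log (-m / v)) + max 0 (Real.log (n / v))) = gu := by
  rcases lt_or_ge v (-m) with h1 | h1
  · have hmpos : 0 < -m := lt_trans hv h1
    have hvn : v < n := lt_of_lt_of_le h1 hmn
    rw [max_eq_right (Real.log_nonneg ((one_le_div hv).2 h1.le)),
      max_eq_right (Real.log_nonneg ((one_le_div hv).2 hvn.le)), hg1 h1]
    have hs : Real.sqrt (-m * n) ≠ 0 := by positivity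
    rw [Real.log_div hs (ne_of_gt hv), Real.log_sqrt (by positivity),
      Real.log_div (ne_of_gt hmpos) (ne_of_gt hv), Real.log_div (ne_of_gt hn) (ne_of_gt hv),
      Real.log_mul (ne_of_gt hmpos) (ne_of_gt hn)]
    field_simp
    ring
  · rw [max_eq_left (Real.log_nonpos (div_nonneg (by linarith) hv.le)
      ((div_le_one hv).2 h1)), zero_add]
    rcases lt_or_ge v n with h2 | h2
    · rw [max_eq_right (Real.log_nonneg ((one_le_div hv).2 h2.le)), hg2 h1 h2, one_div]
    · rw [max_eq_left (Real.log_nonpos (div_nonneg hn.le hv.le) ((div_le_one hv).2 h2)),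
        hg3 h2, mul_zero]

lemma map_affine (a p r : ℝ) (ha : 0 < a) (hr : 0 < r) :
    Measure.map (fun t => p + t * r) (uniformMeasure (-a) a)
      = uniformMeasure (p - a * r) (p + a * r) := by
  have hf : Measurable (fun t : ℝ => p + t * r) := measurable_const.add (measurable_id.mul_const r)
  have hpre : Set.Icc (-a) a = (fun t : ℝ => p + t * r) ⁻¹' Set.Icc (p - a * r) (p + a * r) := by
    ext t
    simp only [Set.mem_preimage, Set.mem_Icc]
    constructor
    · rintro ⟨h1, h2⟩; constructor <;> nlinarith
    · rintro ⟨h1, h2⟩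
      constructor <;> [nlinarith; nlinarith]
  have hmapvol : Measure.map (fun t : ℝ => p + t * r) volume
      = (ENNReal.ofReal r)⁻¹ • volume := by
    have h1 : (fun t : ℝ => p + t * r) = (fun y : ℝ => p + y) ∘ (fun t : ℝ => t * r) := rfl
    rw [h1, ← Measure.map_map
        (by exact measurable_const.add measurable_id : Measurable fun y : ℝ => p + y)
        (by exact measurable_id.mul_const r : Measurable fun t : ℝ => t * r),
      Real.map_volume_mul_right (ne_of_gt hr), Measure.map_smul,
      map_add_left_eq_self volume p, abs_of_pos (inv_pos.2 hr),
      ENNReal.ofReal_inv_of_pos hr]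
  unfold uniformMeasure
  rw [Measure.map_smul, hpre, ← Measure.restrict_map hf (measurableSet_Icc), hmapvol,
    Measure.restrict_smul, smul_smul]
  congr 1
  rw [show p + a * r - (p - a * r) = (a - -a) * r by ring,
    ENNReal.ofReal_mul (by linarith),
    ENNReal.mul_inv (Or.inl (by simp only [ne_eq, ENNReal.ofReal_eq_zero, not_le]; linarith))
      (Or.inl ENNReal.ofReal_ne_top)]

lemma uniform_apply_lintegral (a p r : ℝ) (ha : 0 < a) (hr : 0 < r) {S : Set ℝ}
    (hS : MeasurableSet S) :
    uniformMeasure (p - a * r) (p + a * r) S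
      = ∫⁻ u in S, (if |u - p| ≤ a * r then ENNReal.ofReal ((2 * (a * r))⁻¹) else 0) := by
  have hIcc : ∀ u : ℝ, u ∈ Set.Icc (p - a * r) (p + a * r) ↔ |u - p| ≤ a * r := by
    intro u
    rw [Set.mem_Icc, abs_le]
    constructor <;> rintro ⟨h1, h2⟩ <;> constructor <;> linarith
  have : ∀ u : ℝ, (if |u - p| ≤ a * r then ENNReal.ofReal ((2 * (a * r))⁻¹) else 0)
      = (Set.Icc (p - a * r) (p + a * r)).indicator
          (fun _ => ENNReal.ofReal ((2 * (a * r))⁻¹)) u := by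
    intro u
    rw [Set.indicator_apply]
    simp only [hIcc u]
  simp only [this]
  rw [lintegral_indicator_const₀ (measurableSet_Icc.nullMeasurableSet), Measure.restrict_apply
    measurableSet_Icc]
  unfold uniformMeasure
  rw [Measure.smul_apply, Measure.restrict_apply hS, smul_eq_mul]
  rw [show p + a * r - (p - a * r) = 2 * (a * r) by ring, Set.inter_comm,
    ← ENNReal.ofReal_inv_of_pos (by positivity), mul_comm]

/-- Theorem 1, case `m ≤ 0`: the law of `X' = p + A * |C * p - x|` has density `g`
with respect to Lebesgue measure, where `g` is given by equation (15). -/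
theorem gwo_density_case_m_nonpos
    {Ω : Type*} [MeasurableSpace Ω] (P : Measure Ω) [IsProbabilityMeasure P]
    (a p x : ℝ) (ha : 0 < a) (hp : p ≠ 0) (A C : Ω → ℝ) (hA : Measurable A) (hC : Measurable C)
    (hInd : IndepFun A C P)
    (hAlaw : Measure.map A P = uniformMeasure (-a) a)
    (hClaw : Measure.map C P = uniformMeasure 0 2)
    (m n : ℝ) (hm : m = a * (-|p| + |x - p|)) (hn : n = a * (|p| + |x - p|))
    (hm0 : m ≤ 0) (g : ℝ → ℝ)
    (hg1 : ∀ u, 0 < |u - p| → |u - p| < -m →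
      g u = (1 / (n - m)) * Real.log (Real.sqrt (-m * n) / |u - p|))
    (hg2 : ∀ u, -m ≤ |u - p| → |u - p| < n →
      g u = (1 / (2 * (n - m))) * Real.log (n / |u - p|))
    (hg3 : ∀ u, n ≤ |u - p| → g u = 0) :
    Measure.map (fun ω => p + A ω * |C ω * p - x|) P
      = volume.withDensity (fun u => ENNReal.ofReal (g u)) := by
  have hpp : 0 < |p| := abs_pos.2 hp
  have hn0 : 0 < n := by nlinarith [abs_nonneg (x - p)]
  have hmn : -m ≤ n := by nlinarith [abs_nonneg (x - p), abs_nonneg p]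
  have hnm : 0 < n - m := by nlinarith
  have habs : |x - p| ≤ |p| := by nlinarith
  have hsx : 0 ≤ x * (2 * p - x) := by nlinarith [sq_abs (x - p), sq_abs p]
  haveI hsfA : SFinite (uniformMeasure (-a) a) := by unfold uniformMeasure; infer_instance
  haveI hsfC : SFinite (uniformMeasure 0 2) := by unfold uniformMeasure; infer_instance
  set F : ℝ × ℝ → ℝ := fun z => p + z.2 * |z.1 * p - x| with hF
  have hFmeas : Measurable F := by
    apply measurable_const.add
    exact measurable_snd.mul ((measurable_fst.mul_const p).sub measurable_const).abs
  have hjoint : Measure.map (fun ω => (C ω, A ω)) P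
      = (uniformMeasure 0 2).prod (uniformMeasure (-a) a) := by
    rw [← hClaw, ← hAlaw]
    exact (indepFun_iff_map_prod_eq_prod_map_map hC.aemeasurable hA.aemeasurable).mp hInd.symm
  have hmap : Measure.map (fun ω => p + A ω * |C ω * p - x|) P
      = Measure.map F ((uniformMeasure 0 2).prod (uniformMeasure (-a) a)) := by
    rw [← hjoint, Measure.map_map hFmeas (hC.prodMk hA)]
    rfl
  set D : ℝ → ℝ → ℝ≥0∞ := fun c u =>
    if |u - p| ≤ a * |c * p - x| then ENNReal.ofReal ((2 * (a * |c * p - x|))⁻¹) else 0 with hD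
  have hDmeas : Measurable (Function.uncurry D) := by
    have h1 : Measurable fun z : ℝ × ℝ => |z.2 - p| := by fun_prop
    have h2 : Measurable fun z : ℝ × ℝ => a * |z.1 * p - x| := by fun_prop
    have h3 : Measurable fun z : ℝ × ℝ => ENNReal.ofReal ((2 * (a * |z.1 * p - x|))⁻¹) := by
      fun_prop
    exact Measurable.ite (measurableSet_le h1 h2) h3 measurable_const
  have hnull : ∀ y : ℝ, uniformMeasure 0 2 {y} = 0 := by
    intro y
    unfold uniformMeasure
    rw [Measure.smul_apply, Measure.restrict_apply (measurableSet_singleton y)]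
    rw [measure_mono_null Set.inter_subset_left Real.volume_singleton, smul_zero]
  -- pointwise density identity
  have hpt : ∀ᵐ u ∂(volume : Measure ℝ),
      (∫⁻ c, D c u ∂(uniformMeasure 0 2)) = ENNReal.ofReal (g u) := by
    have hne : ∀ᵐ u ∂(volume : Measure ℝ), u ≠ p :=
      compl_mem_ae_iff.2 Real.volume_singleton
    filter_upwards [hne] with u hu
    have hv0 : 0 < |u - p| := abs_pos.2 (sub_ne_zero.2 hu)
    have hDphi : ∀ c, D c u = ENNReal.ofReal (phiF a |u - p| (c * p - x)) := by
      intro c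
      simp only [hD]
      unfold phiF
      split_ifs with h
      · rfl
      · simp
    have hmeasφ : Measurable fun c => phiF a |u - p| (c * p - x) :=
      (phi_meas a |u - p|).comp ((measurable_id.mul_const p).sub measurable_const)
    have hint : Integrable (fun c => phiF a |u - p| (c * p - x))
        (volume.restrict (Set.Icc (0:ℝ) 2)) := by
      refine ⟨hmeasφ.aestronglyMeasurable, ?_⟩
      apply HasFiniteIntegral.restrict_of_bounded (C := (2 * |u - p|)⁻¹)
      · rw [Real.volume_Icc]; exact ENNReal.ofReal_lt_top
      · filter_upwards with c
        exact phi_abs_le a |u - p| hv0 (c * p - x)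
    have hval : (2:ℝ)⁻¹ * (∫ c in Set.Icc (0:ℝ) 2, phiF a |u - p| (c * p - x)) = g u := by
      have hIoc : (∫ c in Set.Icc (0:ℝ) 2, phiF a |u - p| (c * p - x))
          = ∫ c in (0:ℝ)..2, phiF a |u - p| (c * p - x) := by
        rw [intervalIntegral.integral_of_le (by norm_num : (0:ℝ) ≤ 2),
          MeasureTheory.integral_Icc_eq_integral_Ioc]
      have hswap : (∫ c in (0:ℝ)..2, phiF a |u - p| (c * p - x))
          = ∫ c in (0:ℝ)..2, phiF a |u - p| (p * c - x) := by
        apply intervalIntegral.integral_congr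
        intro c _
        show phiF a |u - p| (c * p - x) = phiF a |u - p| (p * c - x)
        rw [mul_comm c p]
      rw [hIoc, hswap, integral_phi a p x _ ha hp hv0 hsx,
        density_value a p x _ m n ha hp hv0 hm hn hm0]
      exact val_eq_g m n _ hv0 hn0 hm0 hmn hnm (g u) (hg1 u hv0) (hg2 u) (hg3 u)
    calc ∫⁻ c, D c u ∂(uniformMeasure 0 2)
        = (ENNReal.ofReal 2)⁻¹
            * ∫⁻ c in Set.Icc (0:ℝ) 2, ENNReal.ofReal (phiF a |u - p| (c * p - x)) := by
          unfold uniformMeasure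
          rw [lintegral_smul_measure]
          norm_num
          congr 1
          exact lintegral_congr fun c => hDphi c
      _ = (ENNReal.ofReal 2)⁻¹
            * ENNReal.ofReal (∫ c in Set.Icc (0:ℝ) 2, phiF a |u - p| (c * p - x)) := by
          rw [← ofReal_integral_eq_lintegral_ofReal hint
            (Filter.Eventually.of_forall fun c => phi_nonneg a |u - p| (c * p - x) ha.le)]
      _ = ENNReal.ofReal (g u) := by
          rw [← hval, ← ENNReal.ofReal_inv_of_pos (by norm_num : (0:ℝ) < 2),
            ← ENNReal.ofReal_mul (by norm_num)]
  -- assemble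
  rw [hmap]
  refine Measure.ext fun S hS => ?_
  rw [Measure.map_apply hFmeas hS, withDensity_apply _ hS,
    Measure.prod_apply (hFmeas hS)]
  have hsec : ∀ᵐ c ∂(uniformMeasure 0 2),
      (uniformMeasure (-a) a) (Prod.mk c ⁻¹' (F ⁻¹' S)) = ∫⁻ u in S, D c u := by
    have hae : ∀ᵐ c ∂(uniformMeasure 0 2), c * p - x ≠ 0 := by
      rw [ae_iff]
      refine measure_mono_null (fun c hc => ?_) (hnull (x / p))
      simp only [Set.mem_setOf_eq, not_not] at hc
      have : c = x / p := by field_simp; linarith [hc]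
      simp [this]
    filter_upwards [hae] with c hc
    have hr : 0 < |c * p - x| := abs_pos.2 hc
    have hpre : Prod.mk c ⁻¹' (F ⁻¹' S) = (fun t => p + t * |c * p - x|) ⁻¹' S := rfl
    rw [hpre, ← Measure.map_apply
      (by exact measurable_const.add (measurable_id.mul_const |c * p - x|) :
        Measurable fun t : ℝ => p + t * |c * p - x|) hS,
      map_affine a p _ ha hr, uniform_apply_lintegral a p _ ha hr hS]
  rw [lintegral_congr_ae hsec,
    lintegral_lintegral_swap hDmeas.aemeasurable]
  exact lintegral_congr_ae (ae_restrict_of_ae hpt)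
end

section
/- Suppose p ≠ 0 and m > 0, where m = a·(-|p| + |x - p|) and n = a·(|p| + |x - p|). Then the law of X' is absolutely continuous with respect to Lebesgue measure with density g given by: g(u) = (1/(2(n - m)))·ln(n/m) when |u - p| < m; g(u) = (1/(2(n - m)))·ln( n / |u - p| ) when m ≤ |u - p| < n; and g(u) = 0 when |u - p| ≥ n. -/
open MeasureTheory ProbabilityTheory
open scoped ENNReal

/-!
Conditionally on `C = c`, `X'` is uniform on `[p - a k, p + a k]` with `k = |c p - x|`, so the law
of `X'` is a scale mixture of uniform laws, with density `u ↦ E[1{|u - p| ≤ a K} / (2 a K)]` for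
`K = |C p - x|`. When `m > 0` the root `x / p` of `c ↦ c p - x` lies outside `[0, 2]`, so this map
has constant sign there, and `K` is the affine image of `C`: uniform on `[m / a, n / a]`.
Integrating `1 / (2 a k)` over `k ∈ [max(m, |u - p|) / a, n / a]` produces the logarithm.
-/

open Set

theorem map_affine_uniformMeasure {α : ℝ} (hα : 0 < α) (β s t : ℝ) :
    (uniformMeasure s t).map (fun y => α * y + β)
      = uniformMeasure (α * s + β) (α * t + β) := by
  have hf : Measurable fun y : ℝ => α * y + β := by fun_prop
  have hpre : (fun y => α * y + β) ⁻¹' Icc (α * s + β) (α * t + β) = Icc s t := by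
    ext y; simp [mul_le_mul_iff_right₀ hα]
  have hvol : volume.map (fun y : ℝ => α * y + β) = (ENNReal.ofReal α)⁻¹ • volume := by
    change volume.map ((· + β) ∘ (α * ·)) = _
    rw [← Measure.map_map (measurable_add_const β) (measurable_const_mul α),
      Real.map_volume_mul_left hα.ne', Measure.map_smul, map_add_right_eq_self,
      abs_of_pos (inv_pos.2 hα), ENNReal.ofReal_inv_of_pos hα]
  rw [uniformMeasure, uniformMeasure, Measure.map_smul, ← hpre,
    ← Measure.restrict_map hf measurableSet_Icc, hvol, Measure.restrict_smul, smul_smul,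
    show α * t + β - (α * s + β) = α * (t - s) by ring, ENNReal.ofReal_mul hα.le,
    ENNReal.mul_inv (.inr ENNReal.ofReal_ne_top) (.inl ENNReal.ofReal_ne_top), mul_comm]

theorem map_neg_uniformMeasure (s t : ℝ) :
    (uniformMeasure s t).map Neg.neg = uniformMeasure (-t) (-s) := by
  rw [uniformMeasure, uniformMeasure, Measure.map_smul, neg_sub_neg]
  conv_rhs => rw [← Measure.map_neg_eq_self (volume : Measure ℝ),
    measurableEmbedding_neg.restrict_map, ← neg_Icc, Set.neg_preimage, neg_neg]

theorem uniformMeasure_eq_withDensity (s t : ℝ) :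
    uniformMeasure s t = volume.withDensity fun u => pdf.uniformPDF (Icc s t) u := by
  simp only [pdf.uniformPDF, Real.volume_Icc]
  rw [withDensity_indicator measurableSet_Icc, withDensity_smul _ measurable_one,
    withDensity_one]
  rfl

theorem uniformMeasure_eq_cond (s t : ℝ) : uniformMeasure s t = volume[|Icc s t] := by
  rw [ProbabilityTheory.cond, Real.volume_Icc]
  rfl

instance (s t : ℝ) : IsZeroOrProbabilityMeasure (uniformMeasure s t) := by
  rw [uniformMeasure_eq_cond]
  infer_instance

theorem map_add_mul_uniformMeasure_symm {α : ℝ} (hα : α ≠ 0) (a β : ℝ) :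
    (uniformMeasure (-a) a).map (fun y => β + y * α)
      = uniformMeasure (β - a * |α|) (β + a * |α|) := by
  have hpos : (uniformMeasure (-a) a).map (fun y => |α| * y + β)
      = uniformMeasure (β - a * |α|) (β + a * |α|) := by
    rw [map_affine_uniformMeasure (abs_pos.2 hα)]
    congr 1 <;> ring
  rcases hα.lt_or_gt with hneg | hpos'
  · have : (fun y => β + y * α) = (fun y => |α| * y + β) ∘ Neg.neg := by
      funext y; simp only [Function.comp, abs_of_neg hneg]; ring
    rw [this, ← Measure.map_map (by fun_prop) measurable_neg, map_neg_uniformMeasure, neg_neg,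
      hpos]
  · have : (fun y => β + y * α) = (fun y => |α| * y + β) := by
      funext y; rw [abs_of_pos hpos']; ring
    rw [this, hpos]

theorem exists_abs_mul_sub_eq_affine_on_Icc {p x : ℝ} (h : |p| < |x - p|) :
    ∃ σ, |σ| = |p| ∧ ∀ c ∈ Icc (0 : ℝ) 2, |c * p - x| = |x - p| + (c - 1) * σ := by
  have hsmall : ∀ c ∈ Icc (0 : ℝ) 2, |(c - 1) * p| ≤ |p| := fun c hc => by
    rw [abs_mul]
    exact mul_le_of_le_one_left (abs_nonneg p)
      (abs_le.2 ⟨by linarith [hc.1], by linarith [hc.2]⟩)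
  rcases le_or_gt 0 (x - p) with hd | hd
  · refine ⟨-p, abs_neg p, fun c hc => ?_⟩
    have := (abs_le.1 (hsmall c hc)).2
    rw [abs_of_nonneg hd] at h ⊢
    rw [abs_of_neg (by linarith)]
    ring
  · refine ⟨p, rfl, fun c hc => ?_⟩
    have := (abs_le.1 (hsmall c hc)).1
    rw [abs_of_neg hd] at h ⊢
    rw [abs_of_pos (by linarith)]
    ring

theorem map_abs_mul_sub_uniformMeasure {p x : ℝ} (hp : p ≠ 0) (h : |p| < |x - p|) :
    (uniformMeasure 0 2).map (fun c => |c * p - x|)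
      = uniformMeasure (|x - p| - |p|) (|x - p| + |p|) := by
  obtain ⟨σ, hσ, hK⟩ := exists_abs_mul_sub_eq_affine_on_Icc h
  have hσ0 : σ ≠ 0 := by
    rw [← abs_pos, hσ]; exact abs_pos.2 hp
  have hae : (fun c => |c * p - x|) =ᵐ[uniformMeasure 0 2] fun c => |x - p| + (c - 1) * σ :=
    Measure.ae_smul_measure ((ae_restrict_mem measurableSet_Icc).mono hK) _
  have hcomp : (fun c => |x - p| + (c - 1) * σ)
      = (fun e => |x - p| + e * σ) ∘ fun c => 1 * c + -1 := by
    funext c; simp only [Function.comp]; ring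
  rw [Measure.map_congr hae, hcomp, ← Measure.map_map (by fun_prop) (by fun_prop),
    map_affine_uniformMeasure one_pos, show (1 : ℝ) * 0 + -1 = -1 by norm_num,
    show (1 : ℝ) * 2 + -1 = 1 by norm_num, map_add_mul_uniformMeasure_symm hσ0, hσ, one_mul]

theorem measurable_uniformPDF_Icc :
    Measurable fun z : (ℝ × ℝ) × ℝ => pdf.uniformPDF (Icc z.1.1 z.1.2) z.2 := by
  simp only [pdf.uniformPDF_ite, Real.volume_Icc, mem_Icc]
  exact Measurable.ite ((measurableSet_le measurable_fst.fst measurable_snd).inter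
    (measurableSet_le measurable_snd measurable_fst.snd)) (by fun_prop) measurable_const

theorem map_add_mul_uniformMeasure_prod {a : ℝ} (p : ℝ) (ν : Measure ℝ) [SFinite ν]
    (hν : ∀ᵐ k ∂ν, k ≠ 0) :
    ((uniformMeasure (-a) a).prod ν).map (fun z => p + z.1 * z.2)
      = volume.withDensity fun u =>
          ∫⁻ k, pdf.uniformPDF (Icc (p - a * |k|) (p + a * |k|)) u ∂ν := by
  have hF : Measurable fun z : ℝ × ℝ => p + z.1 * z.2 := by fun_prop
  have hdens : Measurable (Function.uncurry fun k u =>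
      pdf.uniformPDF (Icc (p - a * |k|) (p + a * |k|)) u) :=
    measurable_uniformPDF_Icc.comp
      (f := fun z : ℝ × ℝ => ((p - a * |z.1|, p + a * |z.1|), z.2)) (by fun_prop)
  ext S hS
  have hslice : ∀ k ≠ 0, uniformMeasure (-a) a ((fun y => p + y * k) ⁻¹' S)
      = ∫⁻ u in S, pdf.uniformPDF (Icc (p - a * |k|) (p + a * |k|)) u := fun k hk => by
    rw [← Measure.map_apply (by fun_prop) hS, map_add_mul_uniformMeasure_symm hk,
      uniformMeasure_eq_withDensity, withDensity_apply _ hS]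
  rw [Measure.map_apply hF hS, withDensity_apply _ hS, Measure.prod_apply_symm (hF hS),
    ← lintegral_lintegral_swap hdens.aemeasurable]
  exact lintegral_congr_ae (hν.mono hslice)

theorem setLIntegral_Icc_ofReal_inv {l r : ℝ} (hl : 0 < l) (hr : 0 < r) :
    ∫⁻ k in Icc l r, ENNReal.ofReal k⁻¹ = ENNReal.ofReal (Real.log (r / l)) := by
  rcases le_or_gt l r with hlr | hrl
  · have hint : IntegrableOn (fun k : ℝ => k⁻¹) (Icc l r) :=
      (continuousOn_inv₀.mono fun k hk => (hl.trans_le hk.1).ne').integrableOn_Icc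
    have hnonneg : 0 ≤ᵐ[volume.restrict (Icc l r)] fun k : ℝ => k⁻¹ := by
      filter_upwards [ae_restrict_mem measurableSet_Icc] with k hk
      exact inv_nonneg.2 (hl.le.trans hk.1)
    rw [← ofReal_integral_eq_lintegral_ofReal hint hnonneg, integral_Icc_eq_integral_Ioc,
      ← intervalIntegral.integral_of_le hlr, integral_inv_of_pos hl hr]
  · rw [Icc_eq_empty hrl.not_ge, Measure.restrict_empty, lintegral_zero_measure, eq_comm,
      ENNReal.ofReal_eq_zero]
    exact Real.log_nonpos (div_nonneg hr.le hl.le) ((div_le_one hl).2 hrl.le)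

/-- For `|u - p| > a * k₁` the logarithm is negative and `ENNReal.ofReal` truncates it to `0`. -/
theorem lintegral_uniformPDF_uniformMeasure {a k₀ k₁ : ℝ} (ha : 0 < a) (hk₀ : 0 < k₀)
    (hk : k₀ < k₁) (p u : ℝ) :
    ∫⁻ k, pdf.uniformPDF (Icc (p - a * |k|) (p + a * |k|)) u ∂(uniformMeasure k₀ k₁)
      = ENNReal.ofReal
          ((2 * (a * k₁ - a * k₀))⁻¹ * Real.log (a * k₁ / max (a * k₀) |u - p|)) := by
  set w := |u - p|
  have hpdf : ∀ k ∈ Icc k₀ k₁, pdf.uniformPDF (Icc (p - a * |k|) (p + a * |k|)) u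
      = (Ici (w / a)).indicator
          (fun k => ENNReal.ofReal (2 * a)⁻¹ * ENNReal.ofReal k⁻¹) k := by
    intro k hk
    have hk0 : 0 < k := hk₀.trans_le hk.1
    have hmem : u ∈ Icc (p - a * k) (p + a * k) ↔ k ∈ Ici (w / a) := by
      rw [mem_Ici, div_le_iff₀ ha, mem_Icc, mul_comm k, abs_le]
      constructor <;> rintro ⟨h₁, h₂⟩ <;> constructor <;> linarith
    rw [abs_of_pos hk0, pdf.uniformPDF_ite, Real.volume_Icc]
    by_cases h : k ∈ Ici (w / a)
    · rw [if_pos (hmem.2 h), indicator_of_mem h, ← ENNReal.ofReal_mul (by positivity),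
        ← mul_inv, ENNReal.ofReal_inv_of_pos (by positivity),
        show p + a * k - (p - a * k) = 2 * a * k by ring]
    · rw [if_neg (mt hmem.1 h), indicator_of_notMem h]
  have hmax : max (a * k₀) w = a * max (w / a) k₀ := by
    rw [mul_max_of_nonneg _ _ ha.le, mul_div_cancel₀ _ ha.ne', max_comm]
  have hl : 0 < max (w / a) k₀ := hk₀.trans_le (le_max_right _ _)
  rw [uniformMeasure, lintegral_smul_measure, smul_eq_mul,
    setLIntegral_congr_fun measurableSet_Icc hpdf, setLIntegral_indicator measurableSet_Ici,
    ← Ici_inter_Iic, ← inter_assoc, Ici_inter_Ici, Ici_inter_Iic,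
    lintegral_const_mul _ (by fun_prop), setLIntegral_Icc_ofReal_inv hl (hk₀.trans hk),
    ← ENNReal.ofReal_inv_of_pos (by linarith), ← ENNReal.ofReal_mul (by positivity),
    ← ENNReal.ofReal_mul (inv_nonneg.2 (by linarith)), hmax, mul_div_mul_left _ _ ha.ne']
  congr 1
  field_simp

theorem map_add_mul_uniformMeasure_prod_uniformMeasure {a k₀ k₁ : ℝ} (ha : 0 < a)
    (hk₀ : 0 < k₀) (hk : k₀ < k₁) (p : ℝ) :
    ((uniformMeasure (-a) a).prod (uniformMeasure k₀ k₁)).map (fun z => p + z.1 * z.2)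
      = volume.withDensity fun u => ENNReal.ofReal
          ((2 * (a * k₁ - a * k₀))⁻¹ * Real.log (a * k₁ / max (a * k₀) |u - p|)) := by
  have hν : ∀ᵐ k ∂uniformMeasure k₀ k₁, k ≠ 0 := Measure.ae_smul_measure
    ((ae_restrict_mem measurableSet_Icc).mono fun k hk => (hk₀.trans_le hk.1).ne') _
  simp_rw [map_add_mul_uniformMeasure_prod p _ hν, lintegral_uniformPDF_uniformMeasure ha hk₀ hk]

theorem map_add_mul_eq_map_prod_of_indepFun {Ω : Type*} [MeasurableSpace Ω] {P : Measure Ω}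
    {A T : Ω → ℝ} (hA : Measurable A) (hT : Measurable T) (hInd : IndepFun A T P)
    {μ ν : Measure ℝ} [SigmaFinite μ] [SigmaFinite ν] (hAlaw : P.map A = μ)
    (hTlaw : P.map T = ν) (p : ℝ) :
    P.map (fun ω => p + A ω * T ω) = (μ.prod ν).map (fun z => p + z.1 * z.2) := by
  subst hAlaw hTlaw
  rw [← (indepFun_iff_map_prod_eq_prod_map_map' hA.aemeasurable hT.aemeasurable
    inferInstance inferInstance).1 hInd, Measure.map_map (by fun_prop) (by fun_prop)]
  rfl

theorem gwo_density_case_m_pos_general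
    {Ω : Type*} [MeasurableSpace Ω] (P : Measure Ω)
    (a p x : ℝ) (ha : 0 < a) (hp : p ≠ 0) (A C : Ω → ℝ) (hA : Measurable A) (hC : Measurable C)
    (hInd : IndepFun A C P)
    (hAlaw : Measure.map A P = uniformMeasure (-a) a)
    (hClaw : Measure.map C P = uniformMeasure 0 2)
    (m n : ℝ) (hm : m = a * (-|p| + |x - p|)) (hn : n = a * (|p| + |x - p|))
    (hm0 : 0 < m) (g : ℝ → ℝ)
    (hg1 : ∀ u, |u - p| < m → g u = (1 / (2 * (n - m))) * Real.log (n / m))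
    (hg2 : ∀ u, m ≤ |u - p| → |u - p| < n →
      g u = (1 / (2 * (n - m))) * Real.log (n / |u - p|))
    (hg3 : ∀ u, n ≤ |u - p| → g u = 0) :
    Measure.map (fun ω => p + A ω * |C ω * p - x|) P
      = volume.withDensity (fun u => ENNReal.ofReal (g u)) := by
  have hpx : |p| < |x - p| := by
    have := pos_of_mul_pos_right (hm ▸ hm0) ha.le
    linarith
  have hp0 : 0 < |p| := abs_pos.2 hp
  have hmn : m < n := by rw [hm, hn]; nlinarith
  have hK : Measurable fun c => |c * p - x| := by fun_prop
  have hKlaw : P.map (fun ω => |C ω * p - x|)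
      = uniformMeasure (|x - p| - |p|) (|x - p| + |p|) := by
    rw [← map_abs_mul_sub_uniformMeasure hp hpx, ← hClaw, Measure.map_map hK hC]
    rfl
  rw [map_add_mul_eq_map_prod_of_indepFun (T := fun ω => |C ω * p - x|) hA (hK.comp hC)
      (hInd.comp measurable_id hK) hAlaw hKlaw,
    map_add_mul_uniformMeasure_prod_uniformMeasure ha (sub_pos.2 hpx) (by linarith),
    show a * (|x - p| - |p|) = m by rw [hm]; ring, show a * (|x - p| + |p|) = n by rw [hn]; ring]
  congr 1
  funext u
  rcases lt_or_ge |u - p| m with hlt | hge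
  · rw [hg1 u hlt, max_eq_left hlt.le, one_div]
  rcases lt_or_ge |u - p| n with hlt' | hge'
  · rw [hg2 u hge hlt', max_eq_right hge, one_div]
  · rw [hg3 u hge', ENNReal.ofReal_zero, ENNReal.ofReal_eq_zero, max_eq_right hge]
    exact mul_nonpos_of_nonneg_of_nonpos (inv_nonneg.2 (by linarith)) (Real.log_nonpos
      (div_nonneg (hm0.trans hmn).le (abs_nonneg _)) (div_le_one_of_le₀ hge' (abs_nonneg _)))

/-- Theorem 1, case `m > 0`: the law of `X' = p + A * |C * p - x|` has density `g`
with respect to Lebesgue measure, where `g` is given by equation (16). -/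
theorem gwo_density_case_m_pos
    {Ω : Type*} [MeasurableSpace Ω] (P : Measure Ω) [IsProbabilityMeasure P]
    (a p x : ℝ) (ha : 0 < a) (hp : p ≠ 0) (A C : Ω → ℝ) (hA : Measurable A) (hC : Measurable C)
    (hInd : IndepFun A C P)
    (hAlaw : Measure.map A P = uniformMeasure (-a) a)
    (hClaw : Measure.map C P = uniformMeasure 0 2)
    (m n : ℝ) (hm : m = a * (-|p| + |x - p|)) (hn : n = a * (|p| + |x - p|))
    (hm0 : 0 < m) (g : ℝ → ℝ)
    (hg1 : ∀ u, |u - p| < m → g u = (1 / (2 * (n - m))) * Real.log (n / m))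
    (hg2 : ∀ u, m ≤ |u - p| → |u - p| < n →
      g u = (1 / (2 * (n - m))) * Real.log (n / |u - p|))
    (hg3 : ∀ u, n ≤ |u - p| → g u = 0) :
    Measure.map (fun ω => p + A ω * |C ω * p - x|) P
      = volume.withDensity (fun u => ENNReal.ofReal (g u)) :=
  gwo_density_case_m_pos_general P a p x ha hp A C hA hC hInd hAlaw hClaw m n hm hn hm0 g hg1 hg2
    hg3
end

section
/- Let f, g : ℝ → ℝ be nonnegative integrable functions that are even (f(-v) = f(v) and g(-v) = g(v) for all v) and monotone non-decreasing on (-∞, 0]. Then the convolution f * g is monotone non-decreasing on (-∞, 0]: for all u, Δu with u < u + Δu ≤ 0, (f * g)(u + Δu) ≥ (f * g)(u). -/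
open MeasureTheory Set

/-!
Let `x ≤ y` with `x + y ≤ 0`. Substituting `v ↦ x + y - v` (reflection through
`m = (x + y) / 2`) and using that `g` is even, `2 ((f * g)(y) - (f * g)(x))` becomes the integral of
`(f v - f (x + y - v)) * (g (y - v) - g (x - v))`. Since `f` and `g` are non-increasing in `|·|`
and `m ≤ 0`, both factors are `≤ 0` for `v ≤ m` and `≥ 0` for `v ≥ m`, so the integrand is
nonnegative.
-/

/-- The convolution of two real functions: `(f * g)(x) = ∫ f(v) · g(x - v) dv`. -/
noncomputable def conv (f g : ℝ → ℝ) : ℝ → ℝ := fun x => ∫ v, f v * g (x - v)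

theorem Function.Even.apply_le_apply_of_abs_le {β : Type*} [Preorder β] {f : ℝ → β}
    (hfe : Function.Even f) (hfm : MonotoneOn f (Iic 0)) {a b : ℝ}
    (hab : |a| ≤ |b|) : f b ≤ f a := by
  have h_abs : ∀ c, f c = f (-|c|) := fun c => by
    rcases le_or_gt 0 c with hc | hc
    · rw [abs_of_nonneg hc, hfe]
    · rw [abs_of_neg hc, neg_neg]
  rw [h_abs a, h_abs b]
  exact hfm (by simp) (by simp) (neg_le_neg hab)

theorem integrable_mul_comp_sub_of_bounded {f g : ℝ → ℝ} {C : ℝ} (hf : Integrable f)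
    (hg : Integrable g) (hC : ∀ v, ‖g v‖ ≤ C) (x : ℝ) :
    Integrable (fun v => f v * g (x - v)) :=
  hf.mul_bdd (by simpa using (hg.comp_sub_left x).aestronglyMeasurable)
    (Filter.Eventually.of_forall fun v => hC (x - v))

theorem two_mul_conv_sub_conv {f g : ℝ → ℝ} (hge : Function.Even g) {x y : ℝ}
    (hx : Integrable (fun v => f v * g (x - v))) (hy : Integrable (fun v => f v * g (y - v))) :
    2 * (conv f g y - conv f g x)
      = ∫ v, (f v - f (x + y - v)) * (g (y - v) - g (x - v)) := by
  set φ : ℝ → ℝ := fun v => f v * (g (y - v) - g (x - v)) with hφ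
  have hφ_int : Integrable φ := by
    simp only [hφ, mul_sub]
    exact hy.sub hx
  have h_diff : conv f g y - conv f g x = ∫ v, φ v := by
    simp only [conv, hφ, mul_sub, integral_sub hy hx]
  have h_reflect : ∀ v, φ v + φ (x + y - v)
      = (f v - f (x + y - v)) * (g (y - v) - g (x - v)) := fun v => by
    have h₁ : y - (x + y - v) = -(x - v) := by ring
    have h₂ : x - (x + y - v) = -(y - v) := by ring
    simp only [hφ, h₁, h₂, hge _]
    ring
  rw [h_diff, two_mul]
  nth_rw 2 [← integral_sub_left_eq_self φ volume (x + y)]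
  rw [← integral_add hφ_int (hφ_int.comp_sub_left (x + y))]
  exact integral_congr_ae (Filter.Eventually.of_forall h_reflect)

theorem mul_sub_reflect_nonneg {f g : ℝ → ℝ} (hfe : Function.Even f)
    (hfm : MonotoneOn f (Iic 0)) (hge : Function.Even g) (hgm : MonotoneOn g (Iic 0)) {x y : ℝ} (hxy : x ≤ y)
    (hxy0 : x + y ≤ 0) (v : ℝ) :
    0 ≤ (f v - f (x + y - v)) * (g (y - v) - g (x - v)) := by
  rcases le_total (2 * v) (x + y) with hv | hv
  · refine mul_nonneg_of_nonpos_of_nonpos (sub_nonpos.mpr ?_) (sub_nonpos.mpr ?_)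
    · exact hfe.apply_le_apply_of_abs_le hfm (sq_le_sq.mp (by nlinarith))
    · exact hge.apply_le_apply_of_abs_le hgm (sq_le_sq.mp (by nlinarith))
  · refine mul_nonneg (sub_nonneg.mpr ?_) (sub_nonneg.mpr ?_)
    · exact hfe.apply_le_apply_of_abs_le hfm (sq_le_sq.mp (by nlinarith))
    · exact hge.apply_le_apply_of_abs_le hgm (sq_le_sq.mp (by nlinarith))

theorem conv_monotone_of_even_monotone_general
    (f g : ℝ → ℝ) (hfi : Integrable f) (hgi : Integrable g)
    (hg0 : ∀ v, 0 ≤ g v)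
    (hfe : ∀ v, f (-v) = f v) (hge : ∀ v, g (-v) = g v)
    (hfm : ∀ ⦃u v : ℝ⦄, u ≤ v → v ≤ 0 → f u ≤ f v)
    (hgm : ∀ ⦃u v : ℝ⦄, u ≤ v → v ≤ 0 → g u ≤ g v) :
    ∀ u Δu : ℝ, u < u + Δu → u + Δu ≤ 0 → conv f g u ≤ conv f g (u + Δu) := by
  intro u Δu h_lt h_nonpos
  have hf_mono : MonotoneOn f (Iic 0) := fun _ _ _ hv huv => hfm huv hv
  have hg_mono : MonotoneOn g (Iic 0) := fun _ _ _ hv huv => hgm huv hv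
  have hg_bdd : ∀ v, ‖g v‖ ≤ g 0 := fun v => by
    rw [Real.norm_of_nonneg (hg0 v)]
    exact Function.Even.apply_le_apply_of_abs_le hge hg_mono (by simp)
  have h_int := integrable_mul_comp_sub_of_bounded hfi hgi hg_bdd
  have h_sym := two_mul_conv_sub_conv (f := f) hge (h_int u) (h_int (u + Δu))
  have h_sum : u + (u + Δu) ≤ 0 := by linarith
  have h_nonneg : 0 ≤ ∫ v, (f v - f (u + (u + Δu) - v)) * (g (u + Δu - v) - g (u - v)) :=
    integral_nonneg (mul_sub_reflect_nonneg hfe hf_mono hge hg_mono h_lt.le h_sum)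
  linarith

/-- If `f` and `g` are nonnegative integrable even functions that are monotone
non-decreasing on `(-∞, 0]`, then their convolution is monotone non-decreasing on
`(-∞, 0]`: for all `u`, `Δu` with `u < u + Δu ≤ 0`, `(f * g)(u + Δu) ≥ (f * g)(u)`. -/
theorem conv_monotone_of_even_monotone
    (f g : ℝ → ℝ) (hfi : Integrable f) (hgi : Integrable g)
    (hf0 : ∀ v, 0 ≤ f v) (hg0 : ∀ v, 0 ≤ g v)
    (hfe : ∀ v, f (-v) = f v) (hge : ∀ v, g (-v) = g v)
    (hfm : ∀ ⦃u v : ℝ⦄, u ≤ v → v ≤ 0 → f u ≤ f v)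
    (hgm : ∀ ⦃u v : ℝ⦄, u ≤ v → v ≤ 0 → g u ≤ g v) :
    ∀ u Δu : ℝ, u < u + Δu → u + Δu ≤ 0 → conv f g u ≤ conv f g (u + Δu) :=
  conv_monotone_of_even_monotone_general f g hfi hgi hg0 hfe hge hfm hgm
end
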